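/- Let x_l be a mode with x̂_l(η) = B_l(η) e^{-i2πθ_l(η)}, where B_l ∈ C¹ with |B_l'| ≤ ε₁, B_l > 0, and θ_l ∈ C³ with |θ_l'''| ≤ ε₂. Define C(h)(t,γ) := ∫_ℝ h(ξ) e^{-i2πξt} e^{-iπγξ²} dξ and I_m := ∫_ℝ |ξ^m g(ξ)| dξ. Then for every m ≥ 0 and every (t,η,γ): |D_{x_l}^{ξ^m g}(t,η,γ) - x̂_l(η) · C(ξ^m g)(θ_l'(η) - t, θ_l''(η) - γ)| ≤ ε₁ I_{m+1} + (π/3) ε₂ B_l(η) I_{m+3}. -/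

import Mathlib

open Real MeasureTheory

noncomputable def cexp (x : ℝ) : ℂ := Complex.exp (Complex.I * (x : ℂ))

/-- Frequency-domain chirplet transform with window `g`, applied to `xhat`. -/
noncomputable def fct (xhat g : ℝ → ℂ) (t η γ : ℝ) : ℂ :=
  ∫ ξ : ℝ, xhat (ξ + η) * g ξ * cexp (2 * π * ξ * t) * cexp (π * γ * ξ ^ 2)

/-- `C(h)(t,γ) = ∫ h(ξ) e^{-i2πξt} e^{-iπγξ²} dξ`. -/
noncomputable def Cg (h : ℝ → ℂ) (t γ : ℝ) : ℂ :=
  ∫ ξ : ℝ, h ξ * cexp (-(2 * π * ξ * t)) * cexp (-(π * γ * ξ ^ 2))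

/-- Window `ξ ↦ ξ^m g(ξ)`. -/
noncomputable def wm (g : ℝ → ℂ) (m : ℕ) : ℝ → ℂ := fun ξ => (ξ : ℂ) ^ m * g ξ

/-- `I_m = ∫ |ξ^m g(ξ)| dξ`. -/
noncomputable def Imom (g : ℝ → ℂ) (m : ℕ) : ℝ := ∫ ξ : ℝ, ‖wm g m ξ‖

open intervalIntegral
lemma cexp_norm (x : ℝ) : ‖cexp x‖ = 1 := by
  simp [cexp, Complex.norm_exp]

lemma cexp_add (a b : ℝ) : cexp (a + b) = cexp a * cexp b := by
  simp [cexp, ← Complex.exp_add]; ring_nf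

lemma cexp_hasDerivAt (x : ℝ) :
    HasDerivAt (fun s : ℝ => cexp s) (cexp x * Complex.I) x := by
  have h1 : HasDerivAt (fun s : ℝ => Complex.I * (s : ℂ)) Complex.I x := by
    simpa using (Complex.ofRealCLM.hasDerivAt (x := x)).const_mul Complex.I
  simpa [cexp] using h1.cexp

lemma cexp_lip (a b : ℝ) : ‖cexp a - cexp b‖ ≤ |a - b| := by
  have := Convex.norm_image_sub_le_of_norm_hasDerivWithin_le
    (f := fun s : ℝ => cexp s) (f' := fun s => cexp s * Complex.I) (C := 1)
    (fun x _ => (cexp_hasDerivAt x).hasDerivWithinAt)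
    (fun x _ => by rw [norm_mul, cexp_norm]; simp) (convex_univ) (Set.mem_univ b)
    (Set.mem_univ a)
  simpa using this

lemma cexp_continuous {f : ℝ → ℝ} (hf : Continuous f) :
    Continuous (fun x => cexp (f x)) :=
  Complex.continuous_exp.comp (continuous_const.mul (Complex.continuous_ofReal.comp hf))

lemma poly_bound (f f' : ℝ → ℝ) (hf : ∀ s, HasDerivAt f (f' s) s) (hf' : Continuous f')
    (h0 : f 0 = 0) (c : ℝ) (k : ℕ) (hd : ∀ s, |f' s| ≤ c * |s| ^ k) (x : ℝ) :
    |f x| ≤ c * |x| ^ (k + 1) / (k + 1) := by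
  have hfx : f x = ∫ s in (0:ℝ)..x, f' s := by
    rw [integral_eq_sub_of_hasDerivAt (fun s _ => hf s) (hf'.intervalIntegrable 0 x), h0,
      sub_zero]
  rcases le_or_gt 0 x with hx | hx
  · rw [hfx]
    calc |∫ s in (0:ℝ)..x, f' s| ≤ ∫ s in (0:ℝ)..x, |f' s| :=
          abs_integral_le_integral_abs hx
      _ ≤ ∫ s in (0:ℝ)..x, c * s ^ k := by
          apply integral_mono_on hx (hf'.abs.intervalIntegrable 0 x)
            ((continuous_const.mul (continuous_pow k)).intervalIntegrable 0 x)
          intro s hs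
          have := hd s
          rwa [abs_of_nonneg hs.1] at this
      _ = c * x ^ (k + 1) / (k + 1) := by
          rw [intervalIntegral.integral_const_mul, integral_pow]
          simp [mul_div_assoc]
      _ = c * |x| ^ (k + 1) / (k + 1) := by rw [abs_of_nonneg hx]
  · rw [hfx, ← neg_neg (∫ s in (0:ℝ)..x, f' s), ← integral_symm, abs_neg]
    calc |∫ s in x..(0:ℝ), f' s| ≤ ∫ s in x..(0:ℝ), |f' s| :=
          abs_integral_le_integral_abs hx.le
      _ ≤ ∫ s in x..(0:ℝ), c * (-s) ^ k := by
          apply integral_mono_on hx.le (hf'.abs.intervalIntegrable x 0)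
            ((continuous_const.mul ((continuous_neg).pow k)).intervalIntegrable x 0)
          intro s hs
          have := hd s
          rwa [abs_of_nonpos hs.2] at this
      _ = c * (-x) ^ (k + 1) / (k + 1) := by
          have h := integral_comp_neg (a := x) (b := (0:ℝ)) (fun s => s ^ k)
          simp only [neg_zero] at h
          rw [intervalIntegral.integral_const_mul, h, integral_pow]
          simp [mul_div_assoc]
      _ = c * |x| ^ (k + 1) / (k + 1) := by rw [abs_of_neg hx]

lemma taylor3_bound (θ : ℝ → ℝ) (hθ : ContDiff ℝ 3 θ) (ε₂ : ℝ)
    (hθ3 : ∀ s : ℝ, |iteratedDeriv 3 θ s| ≤ ε₂) (η ξ : ℝ) :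
    |θ (ξ + η) - θ η - deriv θ η * ξ - iteratedDeriv 2 θ η * ξ ^ 2 / 2|
      ≤ ε₂ * |ξ| ^ 3 / 6 := by
  set d1 := deriv θ with hd1def
  set d2 := iteratedDeriv 2 θ with hd2def
  set d3 := iteratedDeriv 3 θ with hd3def
  have hθ1 : d1 = iteratedDeriv 1 θ := (iteratedDeriv_one).symm
  have hdθ : ∀ y, HasDerivAt θ (d1 y) y := fun y =>
    (hθ.differentiable (by norm_num) y).hasDerivAt
  have hdd1 : ∀ y, HasDerivAt d1 (d2 y) y := by
    intro y
    have h := (hθ.differentiable_iteratedDeriv 1 (by norm_num) y).hasDerivAt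
    rw [← iteratedDeriv_succ] at h
    rwa [hθ1]
  have hdd2 : ∀ y, HasDerivAt d2 (d3 y) y := by
    intro y
    have h := (hθ.differentiable_iteratedDeriv 2 (by norm_num) y).hasDerivAt
    rwa [← iteratedDeriv_succ] at h
  have hc1 : Continuous d1 := by
    rw [hθ1]; exact hθ.continuous_iteratedDeriv 1 (by norm_num)
  have hc2 : Continuous d2 := hθ.continuous_iteratedDeriv 2 (by norm_num)
  have hc3 : Continuous d3 := hθ.continuous_iteratedDeriv 3 (by norm_num)
  have hshift : ∀ s : ℝ, HasDerivAt (fun u : ℝ => η + u) 1 s := fun s =>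
    (hasDerivAt_id s).const_add η
  -- level 2
  set f₂ : ℝ → ℝ := fun s => d2 (η + s) - d2 η with hf₂def
  have hf₂d : ∀ s, HasDerivAt f₂ (d3 (η + s)) s := by
    intro s
    have := ((hdd2 (η + s)).comp s (hshift s)).sub_const (d2 η)
    simpa [Function.comp, hf₂def] using this
  have h2 : ∀ s : ℝ, |f₂ s| ≤ ε₂ * |s| := by
    intro s
    have := poly_bound f₂ (fun s => d3 (η + s)) hf₂d
      (hc3.comp (continuous_const.add continuous_id)) (by simp [hf₂def]) ε₂ 0
      (fun s => by simpa using hθ3 (η + s)) s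
    simpa using this
  -- level 1
  set f₁ : ℝ → ℝ := fun s => d1 (η + s) - d1 η - d2 η * s with hf₁def
  have hf₁d : ∀ s, HasDerivAt f₁ (f₂ s) s := by
    intro s
    have ha := ((hdd1 (η + s)).comp s (hshift s)).sub_const (d1 η)
    have hb := (hasDerivAt_id s).const_mul (d2 η)
    have := ha.sub hb
    simpa [Function.comp, hf₂def, hf₁def, Pi.sub_def] using this
  have hf₂c : Continuous f₂ := by
    exact (hc2.comp (continuous_const.add continuous_id)).sub continuous_const
  have h1 : ∀ s : ℝ, |f₁ s| ≤ ε₂ / 2 * |s| ^ 2 := by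
    intro s
    have := poly_bound f₁ f₂ hf₁d hf₂c (by simp [hf₁def]) ε₂ 1
      (fun s => by simpa using h2 s) s
    calc |f₁ s| ≤ ε₂ * |s| ^ (1 + 1) / (1 + 1) := by exact_mod_cast this
      _ = ε₂ / 2 * |s| ^ 2 := by ring
  -- level 0
  set f₀ : ℝ → ℝ := fun s => θ (η + s) - θ η - d1 η * s - d2 η * s ^ 2 / 2 with hf₀def
  have hf₀d : ∀ s, HasDerivAt f₀ (f₁ s) s := by
    intro s
    have ha := ((hdθ (η + s)).comp s (hshift s)).sub_const (θ η)
    have hb := (hasDerivAt_id s).const_mul (d1 η)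
    have hcq : HasDerivAt (fun s : ℝ => d2 η * s ^ 2 / 2) (d2 η * s) s := by
      have := ((hasDerivAt_pow 2 s).const_mul (d2 η)).div_const 2
      simpa using this.congr_deriv (by ring)
    have := (ha.sub hb).sub hcq
    simpa [Function.comp, hf₁def, hf₀def, Pi.sub_def] using this
  have hf₁c : Continuous f₁ :=
    ((hc1.comp (continuous_const.add continuous_id)).sub continuous_const).sub
      (continuous_const.mul continuous_id)
  have h0 := poly_bound f₀ f₁ hf₀d hf₁c (by simp [hf₀def]) (ε₂ / 2) 2
    (fun s => h1 s) ξ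
  have : |f₀ ξ| ≤ ε₂ / 2 * |ξ| ^ 3 / 3 := by exact_mod_cast h0
  calc |θ (ξ + η) - θ η - d1 η * ξ - d2 η * ξ ^ 2 / 2| = |f₀ ξ| := by
        rw [hf₀def]; ring_nf
    _ ≤ ε₂ / 2 * |ξ| ^ 3 / 3 := this
    _ = ε₂ * |ξ| ^ 3 / 6 := by ring

/-- Single-mode approximation of the FCT (Lemma B.1). -/
theorem fct_single_mode_approx (g : ℝ → ℂ) (B θ : ℝ → ℝ) (ε₁ ε₂ : ℝ) (m : ℕ)
    (hB : ContDiff ℝ 1 B) (hB1 : ∀ η : ℝ, |deriv B η| ≤ ε₁) (hBpos : ∀ η : ℝ, 0 < B η)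
    (hθ : ContDiff ℝ 3 θ) (hθ3 : ∀ η : ℝ, |iteratedDeriv 3 θ η| ≤ ε₂)
    (hintm : Integrable (wm g m)) (hintm1 : Integrable (wm g (m + 1)))
    (hintm3 : Integrable (wm g (m + 3)))
    (t η γ : ℝ) :
    ‖fct (fun u => (B u : ℂ) * cexp (-(2 * π * θ u))) (wm g m) t η γ
        - (B η : ℂ) * cexp (-(2 * π * θ η))
            * Cg (wm g m) (deriv θ η - t) (iteratedDeriv 2 θ η - γ)‖
      ≤ ε₁ * Imom g (m + 1) + π / 3 * ε₂ * B η * Imom g (m + 3) := by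
  have hε₁ : 0 ≤ ε₁ := le_trans (abs_nonneg _) (hB1 0)
  have hε₂ : 0 ≤ ε₂ := le_trans (abs_nonneg _) (hθ3 0)
  set d1 := deriv θ η
  set d2 := iteratedDeriv 2 θ η
  set F : ℝ → ℂ := fun ξ => ((B (ξ + η) : ℂ) * cexp (-(2 * π * θ (ξ + η)))) * wm g m ξ
      * cexp (2 * π * ξ * t) * cexp (π * γ * ξ ^ 2) with hFdef
  set Gin : ℝ → ℂ := fun ξ => wm g m ξ * cexp (-(2 * π * ξ * (d1 - t)))
      * cexp (-(π * (d2 - γ) * ξ ^ 2)) with hGindef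
  set c0 : ℂ := (B η : ℂ) * cexp (-(2 * π * θ η)) with hc0def
  set G : ℝ → ℂ := fun ξ => c0 * Gin ξ with hGdef
  -- norm facts
  have hnormR : ∀ r : ℝ, ‖(r : ℂ)‖ = |r| := fun r => (Complex.norm_real r).trans (Real.norm_eq_abs r)
  have hwmnorm : ∀ (k : ℕ) (ξ : ℝ), ‖wm g (m + k) ξ‖ = |ξ| ^ k * ‖wm g m ξ‖ := by
    intro k ξ
    simp only [wm, norm_mul, norm_pow, hnormR, pow_add]
    ring
  -- MVT for B
  have hBlip : ∀ a b : ℝ, |B a - B b| ≤ ε₁ * |a - b| := by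
    intro a b
    have := convex_univ.norm_image_sub_le_of_norm_deriv_le
      (f := B) (fun x _ => hB.differentiable (by norm_num) x)
      (fun x _ => hB1 x) (Set.mem_univ b) (Set.mem_univ a)
    simpa using this
  -- measurability
  have hgmeas : AEStronglyMeasurable (wm g m) volume := hintm.1
  have hFmeas : AEStronglyMeasurable F volume := by
    refine AEStronglyMeasurable.mul (AEStronglyMeasurable.mul (AEStronglyMeasurable.mul ?_
      hgmeas) ?_) ?_
    · exact ((Complex.continuous_ofReal.comp (hB.continuous.comp
        (continuous_id.add continuous_const))).mul
        (cexp_continuous (continuous_const.mul (hθ.continuous.comp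
          (continuous_id.add continuous_const))).neg)).aestronglyMeasurable
    · exact (cexp_continuous (by continuity)).aestronglyMeasurable
    · exact (cexp_continuous (by continuity)).aestronglyMeasurable
  have hGinmeas : AEStronglyMeasurable Gin volume := by
    refine AEStronglyMeasurable.mul (AEStronglyMeasurable.mul hgmeas ?_) ?_
    · exact (cexp_continuous (by continuity)).aestronglyMeasurable
    · exact (cexp_continuous (by continuity)).aestronglyMeasurable
  -- integrability
  have hFnorm : ∀ ξ : ℝ, ‖F ξ‖ = B (ξ + η) * ‖wm g m ξ‖ := by
    intro ξ
    simp only [hFdef, norm_mul, cexp_norm, hnormR, mul_one,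
      abs_of_pos (hBpos (ξ + η))]
  have hFint : Integrable F := by
    refine Integrable.mono' ((hintm.norm.const_mul (B η)).add
      (hintm1.norm.const_mul ε₁)) hFmeas (Filter.Eventually.of_forall fun ξ => ?_)
    rw [hFnorm ξ]
    have h1 : B (ξ + η) ≤ B η + ε₁ * |ξ| := by
      have := hBlip (ξ + η) η
      simp only [add_sub_cancel_right] at this
      have := abs_le.1 this
      linarith [this.2]
    calc B (ξ + η) * ‖wm g m ξ‖ ≤ (B η + ε₁ * |ξ|) * ‖wm g m ξ‖ :=
          mul_le_mul_of_nonneg_right h1 (norm_nonneg _)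
      _ = B η * ‖wm g m ξ‖ + ε₁ * ‖wm g (m + 1) ξ‖ := by
          rw [hwmnorm 1 ξ]; ring
  have hGinint : Integrable Gin := by
    refine Integrable.mono' hintm.norm hGinmeas (Filter.Eventually.of_forall fun ξ => ?_)
    simp only [hGindef, norm_mul, cexp_norm, mul_one, le_refl]
  have hGint : Integrable G := hGinint.const_mul c0
  -- rewrite difference as single integral
  have hsplit : fct (fun u => (B u : ℂ) * cexp (-(2 * π * θ u))) (wm g m) t η γ
      - c0 * Cg (wm g m) (d1 - t) (d2 - γ) = ∫ ξ : ℝ, (F ξ - G ξ) := by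
    have h1 : fct (fun u => (B u : ℂ) * cexp (-(2 * π * θ u))) (wm g m) t η γ
        = ∫ ξ : ℝ, F ξ := rfl
    have h2 : c0 * Cg (wm g m) (d1 - t) (d2 - γ) = ∫ ξ : ℝ, G ξ := by
      rw [hGdef]
      exact (MeasureTheory.integral_const_mul c0 Gin).symm
    rw [h1, h2, integral_sub hFint hGint]
  -- pointwise bound
  have hpt : ∀ ξ : ℝ, ‖F ξ - G ξ‖
      ≤ ε₁ * ‖wm g (m + 1) ξ‖ + π / 3 * ε₂ * B η * ‖wm g (m + 3) ξ‖ := by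
    intro ξ
    set P1 : ℝ := -(2 * π * θ (ξ + η)) with hP1
    set P2 : ℝ := -(2 * π * (θ η + d1 * ξ + d2 * ξ ^ 2 / 2)) with hP2
    have e1 : cexp (2 * π * ξ * t + π * γ * ξ ^ 2) * cexp P2
        = cexp (-(2 * π * θ η)) * cexp (-(2 * π * ξ * (d1 - t)))
          * cexp (-(π * (d2 - γ) * ξ ^ 2)) := by
      rw [← cexp_add, ← cexp_add, ← cexp_add]
      congr 1
      ring
    have hF : F ξ = wm g m ξ * cexp (2 * π * ξ * t + π * γ * ξ ^ 2)
        * ((B (ξ + η) : ℂ) * cexp P1) := by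
      rw [cexp_add]; simp only [hFdef]; ring
    have hG : G ξ = wm g m ξ * cexp (2 * π * ξ * t + π * γ * ξ ^ 2)
        * ((B η : ℂ) * cexp P2) := by
      simp only [hGdef, hGindef, hc0def]
      linear_combination (B η : ℂ) * wm g m ξ * e1.symm
    rw [hF, hG, ← mul_sub, norm_mul, norm_mul, cexp_norm, mul_one]
    have hΔ : ‖(B (ξ + η) : ℂ) * cexp P1 - (B η : ℂ) * cexp P2‖
        ≤ ε₁ * |ξ| + B η * (π / 3 * ε₂ * |ξ| ^ 3) := by
      have hdecomp : (B (ξ + η) : ℂ) * cexp P1 - (B η : ℂ) * cexp P2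
          = ((B (ξ + η) - B η : ℝ) : ℂ) * cexp P1 + (B η : ℂ) * (cexp P1 - cexp P2) := by
        push_cast; ring
      rw [hdecomp]
      have h1 : ‖((B (ξ + η) - B η : ℝ) : ℂ) * cexp P1‖ ≤ ε₁ * |ξ| := by
        rw [norm_mul, cexp_norm, mul_one, hnormR]
        simpa using hBlip (ξ + η) η
      have h2 : ‖(B η : ℂ) * (cexp P1 - cexp P2)‖ ≤ B η * (π / 3 * ε₂ * |ξ| ^ 3) := by
        rw [norm_mul, hnormR, abs_of_pos (hBpos η)]
        refine mul_le_mul_of_nonneg_left ?_ (hBpos η).le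
        refine le_trans (cexp_lip P1 P2) ?_
        have hPP : P1 - P2 = -(2 * π) * (θ (ξ + η) - θ η - d1 * ξ - d2 * ξ ^ 2 / 2) := by
          rw [hP1, hP2]; ring
        rw [hPP, abs_mul, abs_neg, abs_of_pos (by positivity : (0:ℝ) < 2 * π)]
        have := taylor3_bound θ hθ ε₂ hθ3 η ξ
        calc 2 * π * |θ (ξ + η) - θ η - d1 * ξ - d2 * ξ ^ 2 / 2|
            ≤ 2 * π * (ε₂ * |ξ| ^ 3 / 6) :=
              mul_le_mul_of_nonneg_left this (by positivity)
          _ = π / 3 * ε₂ * |ξ| ^ 3 := by ring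
      exact le_trans (norm_add_le _ _) (add_le_add h1 h2)
    calc ‖wm g m ξ‖ * ‖(B (ξ + η) : ℂ) * cexp P1 - (B η : ℂ) * cexp P2‖
        ≤ ‖wm g m ξ‖ * (ε₁ * |ξ| + B η * (π / 3 * ε₂ * |ξ| ^ 3)) :=
          mul_le_mul_of_nonneg_left hΔ (norm_nonneg _)
      _ = ε₁ * ‖wm g (m + 1) ξ‖ + π / 3 * ε₂ * B η * ‖wm g (m + 3) ξ‖ := by
          rw [hwmnorm 1 ξ, hwmnorm 3 ξ]; ring
  -- put together
  rw [hsplit]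
  have hbint : Integrable (fun ξ : ℝ =>
      ε₁ * ‖wm g (m + 1) ξ‖ + π / 3 * ε₂ * B η * ‖wm g (m + 3) ξ‖) :=
    (hintm1.norm.const_mul ε₁).add (hintm3.norm.const_mul (π / 3 * ε₂ * B η))
  refine le_trans (norm_integral_le_of_norm_le hbint
    (Filter.Eventually.of_forall hpt)) ?_
  rw [integral_add (hintm1.norm.const_mul ε₁) (hintm3.norm.const_mul (π / 3 * ε₂ * B η)),
    MeasureTheory.integral_const_mul, MeasureTheory.integral_const_mul]
  exact le_of_eq rfl
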